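/- Let (G, ℓ⁽⁰⁾) be a finite connected graph with positive edge resistances, and let ℓ(t), t ∈ [0, T), be a solution of the Ricci–Foster flow with ℓ(0) = ℓ⁽⁰⁾. Then the total length decreases at rate one: d/dt (Σ_{e ∈ E} ℓ_e(t)) = −1 for all t ∈ [0, T); equivalently, Σ_e ℓ_e(t) = Σ_e ℓ_e(0) − t. -/

import Mathlib

open Finset

section RicciFoster

variable {V E : Type} [Fintype V] [Fintype E] [DecidableEq V] [DecidableEq E]

/-- One adjacency step: `a` and `b` are joined by an edge in `T`,
or identified by the relation `R`. -/
def stepRel (ends : E → V × V) (T : Finset E) (R : V → V → Prop) (a b : V) : Prop :=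
  (∃ e ∈ T, ends e = (a, b) ∨ ends e = (b, a)) ∨ R a b ∨ R b a

/-- The edge set `T`, together with the identifications `R`, connects all vertices. -/
def Connects (ends : E → V × V) (T : Finset E) (R : V → V → Prop) : Prop :=
  ∀ a b : V, Relation.ReflTransGen (stepRel ends T R) a b

/-- The (multi)graph with vertex set `V`, edge set `E` and endpoint map `ends` is connected. -/
def ConnectedG (ends : E → V × V) : Prop :=
  Connects ends Finset.univ (fun _ _ => False)

open scoped Classical in
/-- Weighted spanning-tree polynomial `τ(G; ℓ) = Σ_{spanning trees T} Π_{e ∉ T} ℓ_e`.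
A spanning tree is an edge set with `|V| - 1` edges connecting all vertices. -/
noncomputable def treePoly (ends : E → V × V) (ℓ : E → ℝ) : ℝ :=
  ∑ T ∈ Finset.univ.filter
      (fun T : Finset E => T.card + 1 = Fintype.card V ∧
        Connects ends T (fun _ _ => False)),
    ∏ e ∈ Tᶜ, ℓ e

open scoped Classical in
/-- Weighted spanning-tree polynomial `τ(G/xy; ℓ)` of the contraction `G/xy`:
spanning trees of `G/xy` are edge sets of `G` with `|V| - 2` edges which connect
all vertices once `x` and `y` are identified. -/
noncomputable def treePolyContract (ends : E → V × V) (x y : V) (ℓ : E → ℝ) : ℝ :=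
  ∑ T ∈ Finset.univ.filter
      (fun T : Finset E => T.card + 2 = Fintype.card V ∧
        Connects ends T (fun a b => a = x ∧ b = y)),
    ∏ e ∈ Tᶜ, ℓ e

/-- Effective resistance `ω_xy = τ(G/xy; ℓ) / τ(G; ℓ)`. -/
noncomputable def effRes (ends : E → V × V) (x y : V) (ℓ : E → ℝ) : ℝ :=
  treePolyContract ends x y ℓ / treePoly ends ℓ

/-- Degree of a vertex (a loop counts twice). -/
def degreeG (ends : E → V × V) (v : V) : ℕ :=
  ∑ e : E, ((if (ends e).1 = v then 1 else 0) + (if (ends e).2 = v then 1 else 0))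

/-- Ricci–Foster curvature `K_e = 1/deg u + 1/deg v − ω_uv/ℓ_e` of the edge `e = uv`. -/
noncomputable def curv (ends : E → V × V) (ℓ : E → ℝ) (e : E) : ℝ :=
  (degreeG ends (ends e).1 : ℝ)⁻¹ + (degreeG ends (ends e).2 : ℝ)⁻¹
    - effRes ends (ends e).1 (ends e).2 ℓ / ℓ e

/-- `ℓ : ℝ → E → ℝ` is a solution of the Ricci–Foster flow on `[0, T)`:
the resistances stay positive and `dℓ_e/dt = −K_e(ℓ(t))` for every edge `e`. -/
def IsRicciFlow (ends : E → V × V) (T : ℝ) (ℓ : ℝ → E → ℝ) : Prop :=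
  ∀ t ∈ Set.Ico (0 : ℝ) T,
    (∀ e, 0 < ℓ t e) ∧
    (∀ e, HasDerivWithinAt (fun s => ℓ s e) (-(curv ends (ℓ t) e)) (Set.Ico (0 : ℝ) T) t)

end RicciFoster

namespace Foster
set_option linter.unusedSectionVars false

open Relation Finset

variable {V E : Type} [Fintype V] [Fintype E] [DecidableEq V] [DecidableEq E]

lemma stepRel_symm (ends : E → V × V) (T : Finset E) (R : V → V → Prop) :
    Symmetric (stepRel ends T R) := by
  intro a b h
  rcases h with ⟨e, he, h⟩ | h
  · exact Or.inl ⟨e, he, h.symm⟩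
  · exact Or.inr h.symm

lemma stepRel_mono {ends : E → V × V} {T T' : Finset E} {R R' : V → V → Prop}
    (hT : T ⊆ T') (hR : ∀ a b, R a b → R' a b) :
    ∀ {a b}, stepRel ends T R a b → stepRel ends T' R' a b := by
  intro a b h
  rcases h with ⟨e, he, h⟩ | h | h
  · exact Or.inl ⟨e, hT he, h⟩
  · exact Or.inr (Or.inl (hR _ _ h))
  · exact Or.inr (Or.inr (hR _ _ h))

lemma connects_mono {ends : E → V × V} {T T' : Finset E} {R R' : V → V → Prop}
    (hT : T ⊆ T') (hR : ∀ a b, R a b → R' a b) (h : Connects ends T R) :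
    Connects ends T' R' := fun a b => ReflTransGen.mono (fun _ _ hs => stepRel_mono hT hR hs) _ _ (h a b)

/-- The relation `R` augmented by the single pair `(u, v)`. -/
def addPair (R : V → V → Prop) (u v : V) : V → V → Prop :=
  fun a b => R a b ∨ (a = u ∧ b = v)

lemma eqvGen_addPair_of {R : V → V → Prop} {u v a b : V} (h : ¬ EqvGen R u v)
    (hab : EqvGen (addPair R u v) a b) :
    EqvGen R a b ∨ (EqvGen R a u ∧ EqvGen R v b) ∨ (EqvGen R a v ∧ EqvGen R u b) := by
  induction hab with
  | rel x y hxy =>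
    rcases hxy with hxy | ⟨hx, hy⟩
    · exact Or.inl (EqvGen.rel _ _ hxy)
    · subst hx; subst hy
      exact Or.inr (Or.inl ⟨EqvGen.refl _, EqvGen.refl _⟩)
  | refl x => exact Or.inl (EqvGen.refl x)
  | symm x y _ ih =>
    rcases ih with h1 | ⟨h1, h2⟩ | ⟨h1, h2⟩
    · exact Or.inl h1.symm
    · exact Or.inr (Or.inr ⟨h2.symm, h1.symm⟩)
    · exact Or.inr (Or.inl ⟨h2.symm, h1.symm⟩)
  | trans x y z _ _ ih1 ih2 =>
    rcases ih1 with h1 | ⟨h1, h2⟩ | ⟨h1, h2⟩ <;>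
      rcases ih2 with h3 | ⟨h3, h4⟩ | ⟨h3, h4⟩
    · exact Or.inl (h1.trans _ _ _ h3)
    · exact Or.inr (Or.inl ⟨h1.trans _ _ _ h3, h4⟩)
    · exact Or.inr (Or.inr ⟨h1.trans _ _ _ h3, h4⟩)
    · exact Or.inr (Or.inl ⟨h1, h2.trans _ _ _ h3⟩)
    · exact absurd ((h2.trans _ _ _ h3).symm) h
    · exact Or.inl (h1.trans _ _ _ h4)
    · exact Or.inr (Or.inr ⟨h1, h2.trans _ _ _ h3⟩)
    · exact Or.inl (h1.trans _ _ _ h4)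
    · exact absurd (h2.trans _ _ _ h3) h

lemma eqvGen_mono' {R R' : V → V → Prop} (h : ∀ a b, R a b → R' a b) {a b : V}
    (hab : EqvGen R a b) : EqvGen R' a b := by
  induction hab with
  | rel x y hxy => exact EqvGen.rel _ _ (h _ _ hxy)
  | refl x => exact EqvGen.refl x
  | symm x y _ ih => exact ih.symm
  | trans x y z _ _ ih1 ih2 => exact ih1.trans _ _ _ ih2

open scoped Classical in
/-- The number of equivalence classes of the equivalence relation generated by `R`. -/
noncomputable def nclasses (R : V → V → Prop) : ℕ :=
  Fintype.card (Quotient (EqvGen.setoid R))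

end Foster
namespace Foster
set_option linter.unusedSectionVars false
open Relation Finset

variable {V E : Type} [Fintype V] [Fintype E] [DecidableEq V] [DecidableEq E]

lemma esymm {R : V → V → Prop} {a b : V} (h : EqvGen R a b) : EqvGen R b a :=
  EqvGen.symm _ _ h

lemma etrans {R : V → V → Prop} {a b c : V} (h : EqvGen R a b) (h' : EqvGen R b c) :
    EqvGen R a c := EqvGen.trans _ _ _ h h'

open scoped Classical in
lemma nclasses_addPair {R : V → V → Prop} {u v : V} (h : ¬ EqvGen R u v) :
    nclasses (addPair R u v) + 1 = nclasses R := by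
  classical
  have hpair : EqvGen (addPair R u v) u v := EqvGen.rel _ _ (Or.inr ⟨rfl, rfl⟩)
  -- the auxiliary map
  set g : V → Quotient (EqvGen.setoid R) := fun a =>
    if EqvGen R a v then Quotient.mk (EqvGen.setoid R) u else Quotient.mk (EqvGen.setoid R) a with hg
  have hgne : ∀ a, g a ≠ Quotient.mk (EqvGen.setoid R) v := by
    intro a
    simp only [hg]
    split_ifs with hav
    · intro hc; exact h (Quotient.exact hc)
    · intro hc; exact hav (Quotient.exact hc)
  have hgwd : ∀ a b : V, EqvGen (addPair R u v) a b → g a = g b := by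
    intro a b hab
    rcases eqvGen_addPair_of h hab with h1 | ⟨h1, h2⟩ | ⟨h1, h2⟩
    · simp only [hg]
      by_cases hav : EqvGen R a v
      · rw [if_pos hav, if_pos (etrans (esymm h1) hav)]
      · rw [if_neg hav, if_neg (fun hbv => hav (etrans h1 hbv)),
          Quotient.sound h1]
    · -- EqvGen R a u, EqvGen R v b
      have hav : ¬ EqvGen R a v := fun hc => h (etrans (esymm h1) hc)
      simp only [hg]
      rw [if_neg hav, if_pos (esymm h2), Quotient.sound h1]
    · -- EqvGen R a v, EqvGen R u b
      have hbv : ¬ EqvGen R b v := fun hc => h (etrans h2 hc)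
      simp only [hg]
      rw [if_pos h1, if_neg hbv, Quotient.sound h2]
  let toF : Quotient (EqvGen.setoid (addPair R u v)) → {q : Quotient (EqvGen.setoid R) // q ≠ Quotient.mk (EqvGen.setoid R) v} :=
    Quotient.lift (fun a => (⟨g a, hgne a⟩ : {q : Quotient (EqvGen.setoid R) // q ≠ Quotient.mk (EqvGen.setoid R) v}))
      (fun a b hab => Subtype.ext (hgwd a b hab))
  let invF : {q : Quotient (EqvGen.setoid R) // q ≠ Quotient.mk (EqvGen.setoid R) v} → Quotient (EqvGen.setoid (addPair R u v)) :=
    fun q => Quotient.lift (fun a => Quotient.mk (EqvGen.setoid (addPair R u v)) a)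
      (fun a b hab => Quotient.sound
        (EqvGen.mono (fun x y hxy => Or.inl hxy) _ _ (hab : EqvGen R a b))) q.1
  have hequiv : Quotient (EqvGen.setoid (addPair R u v)) ≃ {q : Quotient (EqvGen.setoid R) // q ≠ Quotient.mk (EqvGen.setoid R) v} := by
    refine ⟨toF, invF, ?_, ?_⟩
    · intro q
      induction q using Quotient.inductionOn with
      | h a =>
        show invF ⟨g a, _⟩ = _
        simp only [hg]
        split_ifs with hav
        · show Quotient.mk (EqvGen.setoid (addPair R u v)) u = Quotient.mk (EqvGen.setoid (addPair R u v)) a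
          refine Quotient.sound ?_
          exact etrans hpair
            (esymm (EqvGen.mono (fun x y hxy => Or.inl hxy) _ _ hav))
        · rfl
    · rintro ⟨q, hq⟩
      induction q using Quotient.inductionOn with
      | h a =>
        have hav : ¬ EqvGen R a v := fun hc => hq (Quotient.sound hc)
        show toF (Quotient.mk (EqvGen.setoid (addPair R u v)) a) = _
        refine Subtype.ext ?_
        show g a = Quotient.mk (EqvGen.setoid R) a
        simp only [hg, if_neg hav]
  have h1 : nclasses (addPair R u v) = Fintype.card {q : Quotient (EqvGen.setoid R) // q ≠ Quotient.mk (EqvGen.setoid R) v} :=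
    Fintype.card_eq.mpr ⟨hequiv⟩
  have h2 : Fintype.card {q : Quotient (EqvGen.setoid R) // q ≠ Quotient.mk (EqvGen.setoid R) v}
      = Fintype.card (Quotient (EqvGen.setoid R)) - Fintype.card {q : Quotient (EqvGen.setoid R) // q = Quotient.mk (EqvGen.setoid R) v} :=
    Fintype.card_subtype_compl _
  have h3 : Fintype.card {q : Quotient (EqvGen.setoid R) // q = Quotient.mk (EqvGen.setoid R) v} = 1 :=
    Fintype.card_subtype_eq _
  have h4 : 0 < Fintype.card (Quotient (EqvGen.setoid R)) :=
    Fintype.card_pos_iff.mpr ⟨Quotient.mk (EqvGen.setoid R) v⟩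
  have : nclasses R = Fintype.card (Quotient (EqvGen.setoid R)) := rfl
  omega

end Foster
namespace Foster
set_option linter.unusedSectionVars false
open Relation Finset

variable {V E : Type} [Fintype V] [Fintype E] [DecidableEq V] [DecidableEq E]

lemma eqvGen_false_iff {a b : V} : EqvGen (fun _ _ : V => False) a b ↔ a = b := by
  constructor
  · intro h
    induction h with
    | rel x y h => exact h.elim
    | refl x => rfl
    | symm _ _ _ ih => exact ih.symm
    | trans _ _ _ _ _ ih1 ih2 => exact ih1.trans ih2
  · rintro rfl; exact EqvGen.refl a

lemma nclasses_false : nclasses (fun _ _ : V => False) = Fintype.card V := by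
  unfold nclasses
  classical
  refine Fintype.card_eq.mpr ⟨⟨Quotient.lift id (fun a b h => eqvGen_false_iff.mp h),
    Quotient.mk _, fun q => Quotient.inductionOn q (fun a => rfl), fun a => rfl⟩⟩

lemma nclasses_le_one (R : V → V → Prop) (h : ∀ a b : V, EqvGen R a b) :
    nclasses R ≤ 1 := by
  unfold nclasses
  classical
  refine Fintype.card_le_one_iff.mpr (fun q q' => ?_)
  induction q using Quotient.inductionOn with
  | h a =>
  induction q' using Quotient.inductionOn with
  | h b => exact Quotient.sound (h a b)

lemma nclasses_pos (R : V → V → Prop) [Nonempty V] : 0 < nclasses R := by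
  unfold nclasses
  classical
  exact Fintype.card_pos_iff.mpr (Nonempty.map (Quotient.mk _) ‹_›)

lemma eqvGen_to_path {ends : E → V × V} {T : Finset E} {R : V → V → Prop} {a b : V}
    (h : EqvGen R a b) : ReflTransGen (stepRel ends T R) a b := by
  induction h with
  | rel x y h => exact ReflTransGen.single (Or.inr (Or.inl h))
  | refl x => exact ReflTransGen.refl
  | symm x y _ ih => exact (@ReflTransGen.stdSymm _ (stepRel ends T R) ⟨fun _ _ h => stepRel_symm ends T R h⟩).symm _ _ ih
  | trans x y z _ _ ih1 ih2 => exact ih1.trans ih2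

lemma connects_empty {ends : E → V × V} {R : V → V → Prop}
    (h : ∀ a b : V, EqvGen R a b) : Connects ends ∅ R :=
  fun a b => eqvGen_to_path (h a b)

lemma exists_crossing_edge {ends : E → V × V} {T : Finset E} {R : V → V → Prop} {a b : V}
    (hpath : ReflTransGen (stepRel ends T R) a b) (hne : ¬ EqvGen R a b) :
    ∃ e ∈ T, ¬ EqvGen R (ends e).1 (ends e).2 := by
  induction hpath with
  | refl => exact absurd (EqvGen.refl a) hne
  | @tail c b hac hstep ih =>
    by_cases hac' : EqvGen R a c
    · have hcb : ¬ EqvGen R c b := fun hc => hne (etrans hac' hc)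
      rcases hstep with ⟨e, he, hends | hends⟩ | hR | hR
      · exact ⟨e, he, by rw [hends]; exact hcb⟩
      · exact ⟨e, he, by rw [hends]; exact fun hc => hcb (esymm hc)⟩
      · exact absurd (EqvGen.rel _ _ hR) hcb
      · exact absurd (esymm (EqvGen.rel _ _ hR)) hcb
    · exact ih hac'

lemma connects_erase {ends : E → V × V} {T : Finset E} {R : V → V → Prop} {e : E}
    (he : e ∈ T) (h : Connects ends T R) :
    Connects ends (T.erase e) (addPair R (ends e).1 (ends e).2) := by
  intro a b
  refine ReflTransGen.mono (fun x y hs => ?_) _ _ (h a b)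
  rcases hs with ⟨f, hf, hends⟩ | hR | hR
  · by_cases hfe : f = e
    · subst hfe
      rcases hends with hends | hends
      · exact Or.inr (Or.inl (Or.inr ⟨by rw [hends], by rw [hends]⟩))
      · exact Or.inr (Or.inr (Or.inr ⟨by rw [hends], by rw [hends]⟩))
    · exact Or.inl ⟨f, Finset.mem_erase.mpr ⟨hfe, hf⟩, hends⟩
  · exact Or.inr (Or.inl (Or.inl hR))
  · exact Or.inr (Or.inr (Or.inl hR))

lemma connects_insert {ends : E → V × V} {S : Finset E} {R : V → V → Prop} {e : E}
    {u v : V} (hends : ends e = (u, v)) (h : Connects ends S (addPair R u v)) :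
    Connects ends (insert e S) R := by
  intro a b
  refine ReflTransGen.mono (fun x y hs => ?_) _ _ (h a b)
  rcases hs with ⟨f, hf, hf'⟩ | (hR | ⟨rfl, rfl⟩) | (hR | ⟨rfl, rfl⟩)
  · exact Or.inl ⟨f, Finset.mem_insert_of_mem hf, hf'⟩
  · exact Or.inr (Or.inl hR)
  · exact Or.inl ⟨e, Finset.mem_insert_self e S, Or.inl hends⟩
  · exact Or.inr (Or.inr hR)
  · exact Or.inl ⟨e, Finset.mem_insert_self e S, Or.inr hends⟩

/-- Lower bound: connecting needs at least `nclasses R - 1` edges. -/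
lemma nclasses_le_of_connects {ends : E → V × V} :
    ∀ (n : ℕ) (T : Finset E) (R : V → V → Prop), T.card = n →
      Connects ends T R → nclasses R ≤ n + 1 := by
  intro n
  induction n with
  | zero =>
    intro T R hcard hconn
    by_cases hall : ∀ a b : V, EqvGen R a b
    · exact (nclasses_le_one R hall).trans (by norm_num)
    · push_neg at hall
      obtain ⟨a, b, hab⟩ := hall
      obtain ⟨e, he, -⟩ := exists_crossing_edge (hconn a b) hab
      simp [Finset.card_eq_zero.mp hcard] at he
  | succ n ih =>
    intro T R hcard hconn
    by_cases hall : ∀ a b : V, EqvGen R a b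
    · exact (nclasses_le_one R hall).trans (by omega)
    · push_neg at hall
      obtain ⟨a, b, hab⟩ := hall
      obtain ⟨e, he, hcross⟩ := exists_crossing_edge (hconn a b) hab
      have h1 := connects_erase he hconn
      have h2 := ih (T.erase e) _ (by rw [Finset.card_erase_of_mem he, hcard]; omega) h1
      have h3 := nclasses_addPair hcross
      omega

/-- Existence: a connecting set contains a spanning subset of `nclasses R - 1` edges. -/
lemma exists_spanning_subset {ends : E → V × V} [Nonempty V] :
    ∀ (n : ℕ) (T : Finset E) (R : V → V → Prop), T.card = n →
      Connects ends T R → ∃ S ⊆ T, Connects ends S R ∧ S.card + 1 = nclasses R := by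
  intro n
  induction n with
  | zero =>
    intro T R hcard hconn
    by_cases hall : ∀ a b : V, EqvGen R a b
    · refine ⟨∅, Finset.empty_subset T, connects_empty hall, ?_⟩
      have := nclasses_le_one R hall
      have := nclasses_pos R (V := V)
      simp; omega
    · push_neg at hall
      obtain ⟨a, b, hab⟩ := hall
      obtain ⟨e, he, -⟩ := exists_crossing_edge (hconn a b) hab
      simp [Finset.card_eq_zero.mp hcard] at he
  | succ n ih =>
    intro T R hcard hconn
    by_cases hall : ∀ a b : V, EqvGen R a b
    · refine ⟨∅, Finset.empty_subset T, connects_empty hall, ?_⟩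
      have := nclasses_le_one R hall
      have := nclasses_pos R (V := V)
      simp; omega
    · push_neg at hall
      obtain ⟨a, b, hab⟩ := hall
      obtain ⟨e, he, hcross⟩ := exists_crossing_edge (hconn a b) hab
      have h1 := connects_erase he hconn
      obtain ⟨S, hS, hSconn, hScard⟩ :=
        ih (T.erase e) _ (by rw [Finset.card_erase_of_mem he, hcard]; omega) h1
      have heS : e ∉ S := fun hc => (Finset.mem_erase.mp (hS hc)).1 rfl
      refine ⟨insert e S, ?_, ?_, ?_⟩
      · intro f hf
        rcases Finset.mem_insert.mp hf with rfl | hf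
        · exact he
        · exact (Finset.erase_subset e T) (hS hf)
      · exact connects_insert rfl hSconn
      · rw [Finset.card_insert_of_notMem heS]
        have h3 := nclasses_addPair hcross
        omega

end Foster
namespace Foster
set_option linter.unusedSectionVars false
open Relation Finset

variable {V E : Type} [Fintype V] [Fintype E] [DecidableEq V] [DecidableEq E]

lemma eqvGen_le_eq {R : V → V → Prop} (h : ∀ a b, R a b → a = b) {a b : V}
    (hab : EqvGen R a b) : a = b := by
  induction hab with
  | rel x y hxy => exact h _ _ hxy
  | refl x => rfl
  | symm _ _ _ ih => exact ih.symm
  | trans _ _ _ _ _ ih1 ih2 => exact ih1.trans ih2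

lemma nclasses_eq_card {R : V → V → Prop} (h : ∀ a b, R a b → a = b) :
    nclasses R = Fintype.card V := by
  unfold nclasses
  classical
  refine Fintype.card_eq.mpr ⟨⟨Quotient.lift id (fun a b hab => eqvGen_le_eq h hab),
    Quotient.mk _, fun q => Quotient.inductionOn q (fun a => rfl), fun a => rfl⟩⟩

lemma rxy_eq_addPair (x y : V) :
    (fun a b : V => a = x ∧ b = y) = addPair (fun _ _ => False) x y := by
  funext a b
  simp [addPair]

lemma addPair_addPair (R : V → V → Prop) (u v : V) :
    addPair (addPair R u v) u v = addPair R u v := by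
  funext a b
  simp [addPair, or_assoc]

/-- `card V ≤ nclasses (pair relation) + 1`. -/
lemma card_le_nclasses_pair (u v : V) :
    Fintype.card V ≤ nclasses (addPair (fun _ _ : V => False) u v) + 1 := by
  by_cases huv : u = v
  · subst huv
    have : nclasses (addPair (fun _ _ : V => False) u u) = Fintype.card V :=
      nclasses_eq_card (by rintro a b (h | ⟨rfl, rfl⟩); exacts [h.elim, rfl])
    omega
  · have h : ¬ EqvGen (fun _ _ : V => False) u v := fun hc => huv (eqvGen_false_iff.mp hc)
    have := nclasses_addPair h
    rw [nclasses_false] at this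
    omega

open scoped Classical in
/-- The spanning-tree polynomial is positive when all weights are positive. -/
lemma treePoly_pos {ends : E → V × V} (hG : ConnectedG ends) [Nonempty V]
    {w : E → ℝ} (hw : ∀ e, 0 < w e) : 0 < treePoly ends w := by
  unfold treePoly
  refine Finset.sum_pos (fun T _ => Finset.prod_pos (fun f _ => hw f)) ?_
  obtain ⟨S, -, hSconn, hScard⟩ :=
    exists_spanning_subset (Finset.univ : Finset E).card Finset.univ
      (fun _ _ => False) rfl hG
  rw [nclasses_false] at hScard
  exact ⟨S, by simp [hScard, hSconn]⟩

open scoped Classical in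
/-- Deletion–contraction style bijection: the contraction polynomial along edge `e`
is the weighted sum over spanning trees containing `e`. -/
lemma treePolyContract_eq {ends : E → V × V} (e : E) (w : E → ℝ) :
    treePolyContract ends (ends e).1 (ends e).2 w
      = ∑ T ∈ Finset.univ.filter
          (fun T : Finset E => (T.card + 1 = Fintype.card V ∧
            Connects ends T (fun _ _ => False)) ∧ e ∈ T),
          w e * ∏ f ∈ Tᶜ, w f := by
  unfold treePolyContract
  have hnotmem : ∀ S : Finset E, S.card + 2 = Fintype.card V →
      Connects ends S (fun a b => a = (ends e).1 ∧ b = (ends e).2) → e ∉ S := by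
    intro S hcard hconn heS
    rw [rxy_eq_addPair] at hconn
    have h1 := connects_erase heS hconn
    rw [addPair_addPair] at h1
    have h2 := nclasses_le_of_connects (S.erase e).card (S.erase e) _ rfl h1
    have h3 := card_le_nclasses_pair (ends e).1 (ends e).2
    have h4 : (S.erase e).card = S.card - 1 := Finset.card_erase_of_mem heS
    have h5 : 1 ≤ S.card := Finset.card_pos.mpr ⟨e, heS⟩
    omega
  refine Finset.sum_nbij' (fun S => insert e S) (fun T => T.erase e) ?_ ?_ ?_ ?_ ?_
  · intro S hS
    rw [Finset.mem_filter] at hS ⊢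
    obtain ⟨-, hcard, hconn⟩ := hS
    have heS : e ∉ S := hnotmem S hcard hconn
    rw [rxy_eq_addPair] at hconn
    refine ⟨Finset.mem_univ _, ⟨?_, ?_⟩, Finset.mem_insert_self e S⟩
    · rw [Finset.card_insert_of_notMem heS]; omega
    · exact connects_insert rfl hconn
  · intro T hT
    rw [Finset.mem_filter] at hT ⊢
    obtain ⟨-, ⟨hcard, hconn⟩, heT⟩ := hT
    refine ⟨Finset.mem_univ _, ?_, ?_⟩
    · have h5 : 1 ≤ T.card := Finset.card_pos.mpr ⟨e, heT⟩
      rw [Finset.card_erase_of_mem heT]; omega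
    · rw [rxy_eq_addPair]
      have h1 := connects_erase heT hconn
      refine connects_mono (le_refl _) (fun a b hab => ?_) h1
      rcases hab with h | h
      · exact h.elim
      · exact Or.inr h
  · intro S hS
    rw [Finset.mem_filter] at hS
    exact Finset.erase_insert (hnotmem S hS.2.1 hS.2.2)
  · intro T hT
    rw [Finset.mem_filter] at hT
    exact Finset.insert_erase hT.2.2
  · intro S hS
    rw [Finset.mem_filter] at hS
    have heS : e ∉ S := hnotmem S hS.2.1 hS.2.2
    have hecompl : e ∈ Sᶜ := Finset.mem_compl.mpr heS
    rw [Finset.compl_insert]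
    exact (Finset.mul_prod_erase Sᶜ w hecompl).symm
end Foster
namespace Foster
set_option linter.unusedSectionVars false
open Relation Finset

variable {V E : Type} [Fintype V] [Fintype E] [DecidableEq V] [DecidableEq E]

lemma degree_pos {ends : E → V × V} (hG : ConnectedG ends) (hE : Nonempty E) (v : V) :
    0 < degreeG ends v := by
  have hex : ∃ e : E, (ends e).1 = v ∨ (ends e).2 = v := by
    by_contra hno
    push_neg at hno
    obtain ⟨e0⟩ := hE
    have hpath := hG v (ends e0).1
    rcases (Relation.ReflTransGen.cases_head hpath) with heq | ⟨c, hstep, -⟩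
    · exact (hno e0).1 heq.symm
    · rcases hstep with ⟨f, -, hf | hf⟩ | hF | hF
      · exact (hno f).1 (by rw [hf])
      · exact (hno f).2 (by rw [hf])
      · exact hF
      · exact hF
  obtain ⟨e, he⟩ := hex
  unfold degreeG
  refine Finset.sum_pos' (fun f _ => by positivity) ⟨e, Finset.mem_univ e, ?_⟩
  rcases he with h | h <;> simp [h]

lemma sum_inv_deg {ends : E → V × V} (hG : ConnectedG ends) (hE : Nonempty E) :
    ∑ e : E, (((degreeG ends (ends e).1 : ℝ))⁻¹ + ((degreeG ends (ends e).2 : ℝ))⁻¹)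
      = Fintype.card V := by
  have hdeg : ∀ v : V, (degreeG ends v : ℝ) ≠ 0 := fun v =>
    Nat.cast_ne_zero.mpr (degree_pos hG hE v).ne'
  calc ∑ e : E, (((degreeG ends (ends e).1 : ℝ))⁻¹ + ((degreeG ends (ends e).2 : ℝ))⁻¹)
      = ∑ e : E, ∑ v : V,
        ((if (ends e).1 = v then (degreeG ends v : ℝ)⁻¹ else 0)
          + (if (ends e).2 = v then (degreeG ends v : ℝ)⁻¹ else 0)) := by
        refine Finset.sum_congr rfl fun e _ => ?_
        rw [Finset.sum_add_distrib, Finset.sum_ite_eq, Finset.sum_ite_eq]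
        simp
    _ = ∑ v : V, ∑ e : E,
        ((if (ends e).1 = v then (degreeG ends v : ℝ)⁻¹ else 0)
          + (if (ends e).2 = v then (degreeG ends v : ℝ)⁻¹ else 0)) := Finset.sum_comm
    _ = ∑ v : V, (1 : ℝ) := by
        refine Finset.sum_congr rfl fun v _ => ?_
        have hcast : (degreeG ends v : ℝ)
            = ∑ e : E, ((if (ends e).1 = v then (1 : ℝ) else 0)
              + (if (ends e).2 = v then (1 : ℝ) else 0)) := by
          unfold degreeG
          push_cast
          rfl
        have : ∑ e : E,
            ((if (ends e).1 = v then (degreeG ends v : ℝ)⁻¹ else 0)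
              + (if (ends e).2 = v then (degreeG ends v : ℝ)⁻¹ else 0))
            = (∑ e : E, ((if (ends e).1 = v then (1 : ℝ) else 0)
              + (if (ends e).2 = v then (1 : ℝ) else 0))) * (degreeG ends v : ℝ)⁻¹ := by
          rw [Finset.sum_mul]
          refine Finset.sum_congr rfl fun e _ => ?_
          split_ifs <;> ring
        rw [this, ← hcast, mul_inv_cancel₀ (hdeg v)]
    _ = Fintype.card V := by simp

open scoped Classical in
lemma sum_effRes {ends : E → V × V} (hG : ConnectedG ends) (hE : Nonempty E) [Nonempty V]
    {w : E → ℝ} (hw : ∀ e, 0 < w e) :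
    ∑ e : E, effRes ends (ends e).1 (ends e).2 w / w e = (Fintype.card V : ℝ) - 1 := by
  have htp : 0 < treePoly ends w := treePoly_pos hG hw
  have hstep : ∀ e : E, effRes ends (ends e).1 (ends e).2 w / w e
      = (∑ T ∈ Finset.univ.filter
          (fun T : Finset E => (T.card + 1 = Fintype.card V ∧
            Connects ends T (fun _ _ => False)) ∧ e ∈ T),
          ∏ f ∈ Tᶜ, w f) / treePoly ends w := by
    intro e
    unfold effRes
    rw [treePolyContract_eq, ← Finset.mul_sum, div_div,
      mul_comm (treePoly ends w) (w e), mul_div_mul_left _ _ (hw e).ne']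
  rw [Finset.sum_congr rfl fun e _ => hstep e, ← Finset.sum_div]
  have hswap : ∑ e : E, ∑ T ∈ Finset.univ.filter
      (fun T : Finset E => (T.card + 1 = Fintype.card V ∧
        Connects ends T (fun _ _ => False)) ∧ e ∈ T),
      ∏ f ∈ Tᶜ, w f
      = ((Fintype.card V : ℝ) - 1) * treePoly ends w := by
    have h1 : ∀ e : E, ∑ T ∈ Finset.univ.filter
        (fun T : Finset E => (T.card + 1 = Fintype.card V ∧
          Connects ends T (fun _ _ => False)) ∧ e ∈ T),
        ∏ f ∈ Tᶜ, w f
        = ∑ T ∈ Finset.univ.filter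
          (fun T : Finset E => T.card + 1 = Fintype.card V ∧
            Connects ends T (fun _ _ => False)),
          (if e ∈ T then ∏ f ∈ Tᶜ, w f else 0) := by
      intro e
      rw [← Finset.sum_filter, Finset.filter_filter]
    rw [Finset.sum_congr rfl fun e _ => h1 e, Finset.sum_comm]
    unfold treePoly
    rw [Finset.mul_sum]
    refine Finset.sum_congr rfl fun T hT => ?_
    rw [Finset.mem_filter] at hT
    have hcardT : (T.card : ℝ) = (Fintype.card V : ℝ) - 1 := by
      have := hT.2.1
      push_cast [← this]
      ring
    calc ∑ e : E, (if e ∈ T then ∏ f ∈ Tᶜ, w f else 0)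
        = ∑ e ∈ T, ∏ f ∈ Tᶜ, w f := by
          rw [Finset.sum_ite_mem, Finset.univ_inter]
      _ = (T.card : ℝ) * ∏ f ∈ Tᶜ, w f := by
          rw [Finset.sum_const, nsmul_eq_mul]
      _ = ((Fintype.card V : ℝ) - 1) * ∏ f ∈ Tᶜ, w f := by rw [hcardT]
  rw [hswap, mul_div_assoc, div_self htp.ne', mul_one]

open scoped Classical in
/-- Foster's theorem: the curvatures sum to `1`. -/
lemma sum_curv {ends : E → V × V} (hG : ConnectedG ends) (hE : Nonempty E)
    {w : E → ℝ} (hw : ∀ e, 0 < w e) :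
    ∑ e : E, curv ends w e = 1 := by
  have hV : Nonempty V := ⟨(ends (Classical.arbitrary E)).1⟩
  unfold curv
  rw [Finset.sum_sub_distrib, sum_inv_deg hG hE, sum_effRes hG hE hw]
  ring

end Foster
/-- Proposition `prop:total-length-flow`: under Ricci–Foster flow the
total length decreases at rate one: `d/dt Σ_e ℓ_e(t) = −1`, equivalently
`Σ_e ℓ_e(t) = Σ_e ℓ_e(0) − t`. -/
theorem total_length_decreases_at_rate_one
    {V E : Type} [Fintype V] [Fintype E] [DecidableEq V] [DecidableEq E]
    (ends : E → V × V) (hG : ConnectedG ends) (hE : Nonempty E)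
    (T : ℝ) (ℓ : ℝ → E → ℝ) (hflow : IsRicciFlow ends T ℓ) :
    ∀ t ∈ Set.Ico (0 : ℝ) T,
      HasDerivWithinAt (fun s => ∑ e : E, ℓ s e) (-1) (Set.Ico (0 : ℝ) T) t ∧
      ∑ e : E, ℓ t e = (∑ e : E, ℓ 0 e) - t := by
  have hderiv : ∀ s ∈ Set.Ico (0 : ℝ) T,
      HasDerivWithinAt (fun r => ∑ e : E, ℓ r e) (-1) (Set.Ico (0 : ℝ) T) s := by
    intro s hs
    obtain ⟨hpos, hd⟩ := hflow s hs
    have hsum : HasDerivWithinAt (fun r => ∑ e : E, ℓ r e)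
        (∑ e : E, -(curv ends (ℓ s) e)) (Set.Ico (0 : ℝ) T) s :=
      HasDerivWithinAt.fun_sum (fun e _ => hd e)
    have hone : (∑ e : E, -(curv ends (ℓ s) e)) = -1 := by
      rw [Finset.sum_neg_distrib, Foster.sum_curv hG hE hpos]
    rwa [hone] at hsum
  intro t ht
  refine ⟨hderiv t ht, ?_⟩
  have key : ∀ y ∈ Set.Icc (0 : ℝ) t, (fun r => ∑ e : E, ℓ r e) y
      = (fun y => (∑ e : E, ℓ 0 e) - y) y := by
    refine eq_of_has_deriv_right_eq (f' := fun _ => (-1 : ℝ)) ?_ ?_ ?_ ?_ ?_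
    · intro x hx
      have hx' : x ∈ Set.Ico (0 : ℝ) T := ⟨hx.1, hx.2.trans ht.2⟩
      refine (hderiv x hx').mono_of_mem_nhdsWithin ?_
      have h1 : Set.Iio T ∈ nhdsWithin x (Set.Ici x) :=
        mem_nhdsWithin_of_mem_nhds (Iio_mem_nhds hx'.2)
      have h2 : Set.Ici x ∈ nhdsWithin x (Set.Ici x) := self_mem_nhdsWithin
      refine Filter.mem_of_superset (Filter.inter_mem h2 h1) ?_
      rintro y ⟨hy1, hy2⟩
      exact ⟨hx'.1.trans hy1, hy2⟩
    · intro x hx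
      exact (hasDerivWithinAt_id x (Set.Ici x)).const_sub (∑ e : E, ℓ 0 e)
    · intro x hx
      have hx' : x ∈ Set.Ico (0 : ℝ) T := ⟨hx.1, lt_of_le_of_lt hx.2 ht.2⟩
      exact ((hderiv x hx').continuousWithinAt).mono
        (fun y hy => ⟨hy.1, lt_of_le_of_lt hy.2 ht.2⟩)
    · exact (continuous_const.sub continuous_id).continuousOn
    · simp
  simpa using key t ⟨ht.1, le_refl t⟩
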